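/- arXiv:2311.09905 — 3 statements merged into one kernel-verified Lean document; each statement's English description precedes it below -/
import Mathlib

section
/- Let m divide n and let N be the n×n doubly stochastic matrix obtained by stacking n/m copies of an m×n nonnegative matrix M with constant column sums m/n and constant row sums. Then there exists a function π : [n] → [m] such that M_{π(j), j} > 0 for all j in [n] and every fiber π^{-1}(i) has exactly n/m elements. -/
/-!
Double counting the entries of `M` forces its common row sum to be `1`, so stacking `n / m` copies
of `M`, with row `k` a copy of row `k % m`, gives an `n × n` doubly stochastic matrix. By
Birkhoff's theorem it has a positive diagonal along some permutation `σ`, and reducing `σ` modulo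
`m` gives `π`; since `σ` is a bijection, the fibers of `π` have the size `n / m` of the residue
classes.
-/

open Finset

theorem Fin.card_filter_val_mod_eq {m n : ℕ} (hdvd : m ∣ n) (i : Fin m) :
    #{k : Fin n | (k : ℕ) % m = i} = n / m := by
  have := Nat.count_modEq_card n i.pos (i : ℕ)
  rw [Nat.count_eq_card_filter_range, ← Nat.Iio_eq_range, ← Fin.map_valEmbedding_univ,
    filter_map, card_map] at this
  simpa [Nat.mod_eq_zero_of_dvd hdvd, Nat.ModEq, Nat.mod_eq_of_lt i.isLt, Function.comp_def]
    using this

section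

variable {R ι κ : Type*} [Fintype ι] [Fintype κ]

theorem Fintype.sum_comp_of_card_fiber_eq [AddCommMonoid R] [DecidableEq ι] (r : κ → ι)
    (q : ℕ) (hr : ∀ i, #{k | r k = i} = q) (f : ι → R) : ∑ k, f (r k) = q • ∑ i, f i := by
  rw [← Finset.sum_fiberwise univ r, smul_sum]
  refine Finset.sum_congr rfl fun i _ => ?_
  rw [Finset.sum_congr rfl fun k hk => by rw [(mem_filter.1 hk).2], sum_const, hr]

theorem Matrix.card_nsmul_eq_card_nsmul_of_sum_row_of_sum_col [AddCommMonoid R]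
    {M : Matrix ι κ R} {c d : R} (hrow : ∀ i, ∑ j, M i j = c) (hcol : ∀ j, ∑ i, M i j = d) :
    Fintype.card ι • c = Fintype.card κ • d := by
  simpa [hrow, hcol] using sum_comm (f := fun i j => M i j) (s := univ) (t := univ)

variable [Field R] [LinearOrder R] [IsStrictOrderedRing R]

theorem exists_perm_forall_pos_of_mem_doublyStochastic [DecidableEq κ] {N : Matrix κ κ R}
    (hN : N ∈ doublyStochastic R κ) : ∃ σ : Equiv.Perm κ, ∀ k, 0 < N k (σ k) := by
  obtain ⟨w, hw_nonneg, hw_sum, rfl⟩ := exists_eq_sum_perm_of_mem_doublyStochastic hN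
  obtain ⟨σ, -, hσ⟩ : ∃ σ ∈ univ, (0 : R) < w σ := exists_lt_of_sum_lt (by simp [hw_sum])
  refine ⟨σ, fun k => hσ.trans_le ?_⟩
  have hterm (τ : Equiv.Perm κ) : 0 ≤ w τ * τ.permMatrix R k (σ k) :=
    mul_nonneg (hw_nonneg τ) (nonneg_of_mem_doublyStochastic permMatrix_mem_doublyStochastic)
  simpa [Matrix.sum_apply, Equiv.Perm.permMatrix, PEquiv.toMatrix_apply] using
    single_le_sum (fun τ _ => hterm τ) (mem_univ σ)

variable [DecidableEq ι] {M : Matrix ι κ R} (r : κ → ι) (q : ℕ) (hr : ∀ i, #{k | r k = i} = q)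
  (hM : ∀ i j, 0 ≤ M i j) (hrow : ∀ i, ∑ j, M i j = 1) (hcol : ∀ j, q * ∑ i, M i j = 1)
include hr hM hrow hcol

theorem Matrix.submatrix_mem_doublyStochastic_of_card_fiber_eq [DecidableEq κ] :
    M.submatrix r id ∈ doublyStochastic R κ := by
  refine mem_doublyStochastic_iff_sum.2 ⟨fun k j => hM _ _, fun k => hrow _, fun j => ?_⟩
  simp only [Matrix.submatrix_apply, id, Fintype.sum_comp_of_card_fiber_eq r q hr (M · j),
    nsmul_eq_mul, hcol]

theorem Matrix.exists_forall_pos_and_card_fiber_eq :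
    ∃ π : κ → ι, (∀ j, 0 < M (π j) j) ∧ ∀ i, #{j | π j = i} = q := by
  classical
  obtain ⟨σ, hσ⟩ := exists_perm_forall_pos_of_mem_doublyStochastic
    (transpose_mem_doublyStochastic_iff.2
      (M.submatrix_mem_doublyStochastic_of_card_fiber_eq r q hr hM hrow hcol))
  exact ⟨r ∘ σ, hσ, fun i => hr i ▸ card_equiv σ (by simp)⟩

end

/-- If `M` is an `m × n` nonnegative matrix (with `m ∣ n`) whose columns all
sum to `m/n` and whose row sums are all equal (so that stacking `n/m` copies of
`M` gives an `n × n` doubly stochastic matrix), then there is a function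
`π : [n] → [m]` with `M (π j) j > 0` for all `j` and each fiber of `π` of
cardinality exactly `n/m`. -/
theorem stacked_matrix_balanced_selection (m n : ℕ) (hm : 0 < m) (hn : 0 < n)
    (hdvd : m ∣ n) (M : Matrix (Fin m) (Fin n) ℝ)
    (hnonneg : ∀ i j, 0 ≤ M i j)
    (hcol : ∀ j, ∑ i, M i j = (m : ℝ) / n)
    (hrow : ∃ c : ℝ, ∀ i, ∑ j, M i j = c) :
    ∃ π : Fin n → Fin m, (∀ j, 0 < M (π j) j) ∧
      ∀ i : Fin m, (Finset.univ.filter fun j => π j = i).card = n / m := by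
  obtain ⟨c, hc⟩ := hrow
  have hmR : (m : ℝ) ≠ 0 := by positivity
  have hnR : (n : ℝ) ≠ 0 := by positivity
  have hc_one : c = 1 := by
    have := M.card_nsmul_eq_card_nsmul_of_sum_row_of_sum_col hc hcol
    simp only [Fintype.card_fin, nsmul_eq_mul] at this
    field_simp at this
    linarith
  subst hc_one
  refine M.exists_forall_pos_and_card_fiber_eq (fun k => ⟨k % m, Nat.mod_lt _ hm⟩) (n / m)
    (fun i => ?_) hnonneg hc (fun j => ?_)
  · simpa [Fin.ext_iff] using Fin.card_filter_val_mod_eq hdvd i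
  · rw [hcol, Nat.cast_div hdvd hmR]
    field_simp
end

section
/- Let μ be a probability measure on R^d that is absolutely continuous with respect to Lebesgue measure and positive on all nonempty open sets, let x_1, ..., x_n be n distinct points in R^d, and for real weights λ_1, ..., λ_n define the power diagram cells C_j = {y ∈ R^d : dist²(y, x_j) − λ_j ≤ dist²(y, x_i) − λ_i for all i ∈ [n]}. Then there exists a unique choice of weights with Σλ_i = 0 such that μ(C_j) = 1/n for all j ∈ [n]. -/
/-!
Existence is variational. The function
`Φ(λ) = ∫ minⱼ (‖y - xⱼ‖² - λⱼ) dμ(y)` has partial derivative `-μ(Cⱼ)` in `λⱼ`: almost every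
`y` lies in the interior of a single cell, because `μ` does not charge the hyperplanes on which two
power functions agree. On the hyperplane `∑ λᵢ = 0`, `Φ` tends to `-∞` at infinity (most of the mass
of `μ` sits on a compact set, where raising `max λ` lowers the integrand), so it attains a maximum
there. At the maximum the gradient is orthogonal to the hyperplane, i.e. all cells have equal mass.

Uniqueness: if `λ ≠ λ'` both equalize, let `S` be the set of indices where `λ - λ'` is maximal.
Raising the weights of `S` strictly more than the others pushes the closed union `A` of their
`λ'`-cells into an open set `U` contained in the union of their `λ`-cells. Equal masses force
`μ (U \ A) = 0`, hence `A = U` is clopen in the connected space `ℝᵈ`. But `A` has positive mass,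
and so does its complement, which contains the remaining cells up to null sets.
-/

open MeasureTheory

/-- The cell of the power diagram with sites `x` and weights `lam`
associated to the site `x j`. -/
def powerCell {d n : ℕ} (x : Fin n → EuclideanSpace ℝ (Fin d))
    (lam : Fin n → ℝ) (j : Fin n) : Set (EuclideanSpace ℝ (Fin d)) :=
  {y | ∀ i, dist y (x j) ^ 2 - lam j ≤ dist y (x i) ^ 2 - lam i}

open Filter Topology Set
open scoped ENNReal

theorem IsClosed.eq_of_subset_of_measure_le {X : Type*} [TopologicalSpace X] [MeasurableSpace X]
    [OpensMeasurableSpace X] {μ : Measure X} [μ.IsOpenPosMeasure] {A U : Set X}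
    (hA : IsClosed A) (hU : IsOpen U) (hAU : A ⊆ U) (hμ : μ U ≤ μ A) (hA_fin : μ A ≠ ∞) :
    A = U := by
  have hnull : μ (U \ A) = 0 := by
    rw [measure_sdiff hAU hA.measurableSet.nullMeasurableSet hA_fin, tsub_eq_zero_of_le hμ]
  exact hAU.antisymm (sdiff_eq_empty.mp ((hU.sdiff hA).eq_empty_of_measure_zero hnull))

section Hyperplane

variable {F : Type*} [NormedAddCommGroup F] [InnerProductSpace ℝ F]

theorem addHaar_preimage_singleton_of_ne_zero [FiniteDimensional ℝ F] [MeasurableSpace F]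
    [BorelSpace F] (μ : Measure F) [μ.IsAddHaarMeasure] {f : F →ₗ[ℝ] ℝ} (hf : f ≠ 0) (c : ℝ) :
    μ (f ⁻¹' {c}) = 0 := by
  obtain ⟨y₀, hy₀⟩ := (LinearMap.surjective_or_eq_zero f).resolve_right hf c
  have : f ⁻¹' {c} = (· + -y₀) ⁻¹' (LinearMap.ker f : Set F) := by
    ext y
    simp [hy₀, ← sub_eq_add_neg, sub_eq_zero]
  rw [this, measure_preimage_add_right]
  exact Measure.addHaar_submodule μ _ (by rwa [Ne, LinearMap.ker_eq_top])

theorem dist_sq_sub_dist_sq (y a b : F) :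
    dist y a ^ 2 - dist y b ^ 2 = 2 * inner ℝ (b - a) y + (‖a‖ ^ 2 - ‖b‖ ^ 2) := by
  rw [dist_eq_norm, dist_eq_norm, norm_sub_sq_real, norm_sub_sq_real, inner_sub_left,
    real_inner_comm a, real_inner_comm b]
  ring

theorem addHaar_setOf_dist_sq_sub_dist_sq_eq [FiniteDimensional ℝ F] [MeasurableSpace F]
    [BorelSpace F] (μ : Measure F) [μ.IsAddHaarMeasure] {a b : F} (hab : a ≠ b) (c : ℝ) :
    μ {y | dist y a ^ 2 - dist y b ^ 2 = c} = 0 := by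
  have hf : innerₛₗ ℝ (b - a) ≠ 0 := fun h => by
    have := LinearMap.congr_fun h (b - a)
    rw [innerₛₗ_apply_apply, LinearMap.zero_apply, inner_self_eq_zero, sub_eq_zero] at this
    exact hab this.symm
  convert addHaar_preimage_singleton_of_ne_zero μ hf ((c - (‖a‖ ^ 2 - ‖b‖ ^ 2)) / 2) using 2
  ext y
  simp only [mem_ofPred_eq, dist_sq_sub_dist_sq, mem_preimage, innerₛₗ_apply_apply,
    mem_singleton_iff]
  constructor <;> intro h <;> linarith

end Hyperplane

theorem norm_le_card_mul_of_sum_eq_zero {ι : Type*} [Fintype ι] {f : ι → ℝ} (hf : ∑ i, f i = 0)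
    {j : ι} (hj : ∀ i, f i ≤ f j) : ‖f‖ ≤ Fintype.card ι * f j := by
  have hgap (i : ι) : f j - f i ≤ Fintype.card ι * f j := by
    simpa [Finset.sum_sub_distrib, hf] using
      Finset.single_le_sum (fun k _ => sub_nonneg.2 (hj k)) (Finset.mem_univ i)
  have hcard : (1 : ℝ) ≤ Fintype.card ι := by exact_mod_cast Fintype.card_pos_iff.2 ⟨j⟩
  have hfj : 0 ≤ f j := by nlinarith [hgap j]
  refine (pi_norm_le_iff_of_nonneg (by positivity)).2 fun i => abs_le.2 ⟨?_, ?_⟩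
  · linarith [hgap i]
  · nlinarith [hj i]

theorem integral_le_measureReal_mul_add_measureReal_compl_mul {α : Type*} [MeasurableSpace α]
    {μ : Measure α} [IsFiniteMeasure μ] {f : α → ℝ} (hf : Integrable f μ) {K : Set α}
    (hK : MeasurableSet K) {a b : ℝ} (ha : ∀ y ∈ K, f y ≤ a) (hb : ∀ y, f y ≤ b) :
    ∫ y, f y ∂μ ≤ μ.real K * a + μ.real Kᶜ * b := by
  have hK' : ∫ y in K, f y ∂μ ≤ ∫ _ in K, a ∂μ :=
    setIntegral_mono_on hf.integrableOn integrableOn_const hK ha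
  have hKc : ∫ y in Kᶜ, f y ∂μ ≤ ∫ _ in Kᶜ, b ∂μ :=
    setIntegral_mono_on hf.integrableOn integrableOn_const hK.compl fun y _ => hb y
  rw [setIntegral_const, smul_eq_mul] at hK' hKc
  rw [← integral_add_compl hK hf]
  linarith

theorem exists_isCompact_measureReal_compl_le {α : Type*} [MeasurableSpace α]
    [TopologicalSpace α] [PolishSpace α] [BorelSpace α] (μ : Measure α) [IsFiniteMeasure μ]
    {ε : ℝ} (hε : 0 < ε) :
    ∃ K, IsCompact K ∧ μ.real Kᶜ ≤ ε := by
  obtain ⟨K, hK, hKc⟩ := isTightMeasureSet_iff_exists_isCompact_measure_compl_le.mp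
    (isTightMeasureSet_singleton (μ := μ)) (ENNReal.ofReal ε) (ENNReal.ofReal_pos.2 hε)
  exact ⟨K, hK, ENNReal.toReal_le_of_le_ofReal hε.le (hKc μ rfl)⟩

section PowerDiagram

variable {d n : ℕ} (x : Fin n → EuclideanSpace ℝ (Fin d)) (lam : Fin n → ℝ)

noncomputable def powerDist (j : Fin n) (y : EuclideanSpace ℝ (Fin d)) : ℝ :=
  dist y (x j) ^ 2 - lam j

theorem mem_powerCell {j : Fin n} {y : EuclideanSpace ℝ (Fin d)} :
    y ∈ powerCell x lam j ↔ ∀ i, powerDist x lam j y ≤ powerDist x lam i y :=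
  Iff.rfl

theorem powerDist_add (lam' : Fin n → ℝ) (i : Fin n) (y : EuclideanSpace ℝ (Fin d)) :
    powerDist x (lam + lam') i y = powerDist x lam i y - lam' i := by
  simp only [powerDist, Pi.add_apply]
  ring

@[fun_prop]
theorem continuous_powerDist (j : Fin n) : Continuous (powerDist x lam j) := by
  unfold powerDist
  fun_prop

theorem isClosed_powerCell (j : Fin n) : IsClosed (powerCell x lam j) := by
  simp only [powerCell, ofPred_forall]
  exact isClosed_iInter fun i => isClosed_le (by fun_prop) (by fun_prop)

theorem exists_mem_powerCell [NeZero n] (y : EuclideanSpace ℝ (Fin d)) :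
    ∃ j, y ∈ powerCell x lam j :=
  Finite.exists_min fun j => powerDist x lam j y

variable {x} {μ : Measure (EuclideanSpace ℝ (Fin d))}

theorem measure_setOf_powerDist_eq (hac : μ ≪ volume) (hx : Function.Injective x) {i j : Fin n}
    (hij : i ≠ j) : μ {y | powerDist x lam i y = powerDist x lam j y} = 0 := by
  refine hac ?_
  convert addHaar_setOf_dist_sq_sub_dist_sq_eq volume (hx.ne hij) (lam i - lam j) using 2
  ext y
  simp only [mem_ofPred_eq, powerDist]
  constructor <;> intro h <;> linarith

theorem aedisjoint_powerCell (hac : μ ≪ volume) (hx : Function.Injective x) {i j : Fin n}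
    (hij : i ≠ j) : AEDisjoint μ (powerCell x lam i) (powerCell x lam j) :=
  measure_mono_null (fun _ hy => le_antisymm (hy.1 j) (hy.2 i))
    (measure_setOf_powerDist_eq lam hac hx hij)

theorem measure_biUnion_powerCell (hac : μ ≪ volume) (hx : Function.Injective x)
    (S : Finset (Fin n)) :
    μ (⋃ j ∈ S, powerCell x lam j) = ∑ j ∈ S, μ (powerCell x lam j) :=
  measure_biUnion_finset₀ (fun _ _ _ _ hij => aedisjoint_powerCell lam hac hx hij)
    fun j _ => (isClosed_powerCell x lam j).measurableSet.nullMeasurableSet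

theorem sum_measure_powerCell [NeZero n] (hac : μ ≪ volume) (hx : Function.Injective x) :
    ∑ j, μ (powerCell x lam j) = μ univ := by
  have hcover : (⋃ j ∈ Finset.univ, powerCell x lam j) = univ := eq_univ_of_forall fun y => by
    obtain ⟨j, hj⟩ := exists_mem_powerCell x lam y
    exact mem_biUnion (Finset.mem_univ j) hj
  rw [← hcover, measure_biUnion_powerCell lam hac hx]

theorem ae_powerDist_lt_of_mem_powerCell (hac : μ ≪ volume) (hx : Function.Injective x) :
    ∀ᵐ y ∂μ, ∀ j, y ∈ powerCell x lam j → ∀ i ≠ j, powerDist x lam j y < powerDist x lam i y := by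
  have : ∀ᵐ y ∂μ, ∀ i j, i ≠ j → powerDist x lam i y ≠ powerDist x lam j y := by
    simp only [ae_all_iff]
    intro i j hij
    exact measure_eq_zero_iff_ae_notMem.mp (measure_setOf_powerDist_eq lam hac hx hij)
  filter_upwards [this] with y hy j hj i hij
  exact (hj i).lt_of_ne (hy j i hij.symm)

end PowerDiagram

section PowerFunctional

variable {d n : ℕ} [NeZero n] (x : Fin n → EuclideanSpace ℝ (Fin d))

noncomputable def powerMin (lam : Fin n → ℝ) (y : EuclideanSpace ℝ (Fin d)) : ℝ :=
  Finset.univ.inf' Finset.univ_nonempty fun j => powerDist x lam j y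

theorem powerMin_le (lam : Fin n → ℝ) (j : Fin n) (y : EuclideanSpace ℝ (Fin d)) :
    powerMin x lam y ≤ powerDist x lam j y :=
  Finset.inf'_le _ (Finset.mem_univ j)

theorem powerMin_eq_of_mem_powerCell {lam : Fin n → ℝ} {j : Fin n} {y : EuclideanSpace ℝ (Fin d)}
    (h : y ∈ powerCell x lam j) : powerMin x lam y = powerDist x lam j y :=
  (powerMin_le x lam j y).antisymm (Finset.le_inf' _ _ fun i _ => h i)

@[fun_prop]
theorem continuous_powerMin (lam : Fin n → ℝ) : Continuous (powerMin x lam) :=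
  Continuous.finset_inf'_apply _ fun j _ => continuous_powerDist x lam j

theorem powerMin_zero_nonneg (y : EuclideanSpace ℝ (Fin d)) : 0 ≤ powerMin x 0 y :=
  Finset.le_inf' _ _ fun j _ => by simp only [powerDist, Pi.zero_apply, sub_zero]; positivity

theorem lipschitzWith_powerMin (y : EuclideanSpace ℝ (Fin d)) :
    LipschitzWith 1 fun lam => powerMin x lam y := by
  refine LipschitzWith.of_le_add fun lam lam' => ?_
  obtain ⟨j, hj⟩ := exists_mem_powerCell x lam' y
  calc powerMin x lam y ≤ powerDist x lam j y := powerMin_le x lam j y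
    _ = powerMin x lam' y + (lam' j - lam j) := by
        rw [powerMin_eq_of_mem_powerCell x hj, powerDist, powerDist]
        ring
    _ ≤ powerMin x lam' y + dist lam lam' := by
        have := dist_le_pi_dist lam lam' j
        rw [Real.dist_eq] at this
        linarith [neg_abs_le (lam j - lam' j)]

theorem abs_powerMin_sub_powerMin_le (lam lam' : Fin n → ℝ) (y : EuclideanSpace ℝ (Fin d)) :
    |powerMin x lam y - powerMin x lam' y| ≤ dist lam lam' := by
  simpa [Real.dist_eq] using (lipschitzWith_powerMin x y).dist_le_mul lam lam'

variable (μ : Measure (EuclideanSpace ℝ (Fin d)))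

theorem integrable_powerMin_sub [IsFiniteMeasure μ] (lam lam' : Fin n → ℝ) :
    Integrable (fun y => powerMin x lam y - powerMin x lam' y) μ :=
  Integrable.of_bound (by fun_prop) (dist lam lam') (ae_of_all _ fun y => by
    simpa only [Real.norm_eq_abs] using abs_powerMin_sub_powerMin_le x lam lam' y)

/-- Subtracting `powerMin x 0` makes the integrand bounded, so `μ` needs no second moment. -/
noncomputable def powerFunctional (lam : Fin n → ℝ) : ℝ :=
  ∫ y, (powerMin x lam y - powerMin x 0 y) ∂μ

theorem powerFunctional_zero : powerFunctional x μ 0 = 0 := by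
  simp [powerFunctional]

variable [IsProbabilityMeasure μ]

theorem lipschitzWith_powerFunctional : LipschitzWith 1 (powerFunctional x μ) := by
  refine LipschitzWith.of_le_add fun lam lam' => ?_
  have hsub : powerFunctional x μ lam - powerFunctional x μ lam' =
      ∫ y, (powerMin x lam y - powerMin x lam' y) ∂μ := by
    rw [powerFunctional, powerFunctional, ← integral_sub (integrable_powerMin_sub x μ lam 0)
      (integrable_powerMin_sub x μ lam' 0)]
    simp only [sub_sub_sub_cancel_right]
  have : ∫ y, (powerMin x lam y - powerMin x lam' y) ∂μ ≤ dist lam lam' := by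
    simpa using integral_mono (integrable_powerMin_sub x μ lam lam') (integrable_const _)
      fun y => (le_abs_self _).trans (abs_powerMin_sub_powerMin_le x lam lam' y)
  linarith

theorem exists_powerFunctional_le :
    ∃ C, ∀ lam : Fin n → ℝ, ∑ i, lam i = 0 → powerFunctional x μ lam ≤ C - ‖lam‖ / n / 2 := by
  have hn : (1 : ℝ) ≤ n := by exact_mod_cast Nat.one_le_iff_ne_zero.2 (NeZero.ne n)
  obtain ⟨K, hK, hKc⟩ := exists_isCompact_measureReal_compl_le μ (ε := 1 / (4 * n)) (by positivity)
  obtain ⟨C, hC⟩ := hK.bddAbove_image (f := fun y => ∑ j, dist y (x j) ^ 2) (by fun_prop)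
  have hKmass : 3 / 4 ≤ μ.real K := by
    have : 1 / (4 * (n : ℝ)) ≤ 1 / 4 := by gcongr; linarith
    linarith [measureReal_add_measureReal_compl (μ := μ) hK.measurableSet, probReal_univ (μ := μ)]
  refine ⟨|C|, fun lam hlam => ?_⟩
  obtain ⟨j, hj⟩ := Finite.exists_max lam
  have hKbound (y) (hy : y ∈ K) : powerMin x lam y - powerMin x 0 y ≤ C - lam j := by
    have := (Finset.single_le_sum (fun i _ => sq_nonneg (dist y (x i))) (Finset.mem_univ j)).trans
      (hC ⟨y, hy, rfl⟩)
    have := powerMin_le x lam j y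
    have := powerMin_zero_nonneg x y
    simp only [powerDist] at *
    linarith
  have hbound (y) : powerMin x lam y - powerMin x 0 y ≤ ‖lam‖ :=
    (le_abs_self _).trans ((abs_powerMin_sub_powerMin_le x lam 0 y).trans_eq (dist_zero_right lam))
  have hnorm : ‖lam‖ / n ≤ lam j := by
    rw [div_le_iff₀ (by positivity), mul_comm]
    simpa using norm_le_card_mul_of_sum_eq_zero hlam hj
  have hC_le : μ.real K * C ≤ |C| :=
    (mul_le_mul_of_nonneg_left (le_abs_self C) measureReal_nonneg).trans
      (mul_le_of_le_one_left (abs_nonneg C) measureReal_le_one)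
  have hK_lam : 3 / 4 * (‖lam‖ / n) ≤ μ.real K * lam j :=
    mul_le_mul hKmass hnorm (by positivity) measureReal_nonneg
  have hKc_lam : μ.real Kᶜ * ‖lam‖ ≤ ‖lam‖ / n / 4 :=
    (mul_le_mul_of_nonneg_right hKc (norm_nonneg _)).trans_eq (by ring)
  calc powerFunctional x μ lam ≤ μ.real K * (C - lam j) + μ.real Kᶜ * ‖lam‖ :=
        integral_le_measureReal_mul_add_measureReal_compl_mul
          (integrable_powerMin_sub x μ lam 0) hK.measurableSet hKbound hbound
    _ ≤ |C| - ‖lam‖ / n / 2 := by linarith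

theorem exists_isMaxOn_powerFunctional :
    ∃ lam : Fin n → ℝ, ∑ i, lam i = 0 ∧
      IsMaxOn (powerFunctional x μ) {lam | ∑ i, lam i = 0} lam := by
  obtain ⟨C, hC⟩ := exists_powerFunctional_le x μ
  refine (lipschitzWith_powerFunctional x μ).continuous.continuousOn.exists_isMaxOn'
    (s := {lam | ∑ i, lam i = 0}) (isClosed_eq (by fun_prop) continuous_const) (x₀ := 0)
    (by simp) ?_
  have hfar : ∀ᶠ lam in cocompact (Fin n → ℝ), 2 * n * C ≤ ‖lam‖ :=
    tendsto_norm_cocompact_atTop.eventually_ge_atTop _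
  filter_upwards [inf_le_left (a := cocompact _) hfar, mem_inf_of_right (mem_principal_self _)]
    with lam hlam hsum
  have := hC lam hsum
  rw [powerFunctional_zero]
  have hn : (0 : ℝ) < n := by exact_mod_cast Nat.pos_of_ne_zero (NeZero.ne n)
  have : C ≤ ‖lam‖ / n / 2 := by
    rw [div_div, le_div_iff₀ (by positivity)]
    linarith
  linarith

end PowerFunctional

section FirstVariation

variable {d n : ℕ} [NeZero n] {x : Fin n → EuclideanSpace ℝ (Fin d)}

theorem hasDerivAt_powerMin_add_smul {lam : Fin n → ℝ} {j : Fin n} {y : EuclideanSpace ℝ (Fin d)}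
    (hy : ∀ i ≠ j, powerDist x lam j y < powerDist x lam i y) (v : Fin n → ℝ) :
    HasDerivAt (fun t : ℝ => powerMin x (lam + t • v) y) (-v j) 0 := by
  have hline (t : ℝ) (i : Fin n) :
      powerDist x (lam + t • v) i y = powerDist x lam i y - t * v i := by
    simp [powerDist_add]
  have hcell : ∀ᶠ t in 𝓝 (0 : ℝ), y ∈ powerCell x (lam + t • v) j := by
    have : ∀ᶠ t in 𝓝 (0 : ℝ), ∀ i, i ≠ j →
        powerDist x lam j y - t * v j < powerDist x lam i y - t * v i := by
      refine eventually_all.2 fun i => ?_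
      rcases eq_or_ne i j with rfl | hij
      · exact Eventually.of_forall fun _ h => absurd rfl h
      · refine (ContinuousAt.eventually_lt (by fun_prop) (by fun_prop) ?_).mono fun _ h _ => h
        simpa using hy i hij
    filter_upwards [this] with t ht
    rw [mem_powerCell]
    intro i
    rw [hline, hline]
    rcases eq_or_ne i j with rfl | hij
    exacts [le_rfl, (ht i hij).le]
  have hderiv : HasDerivAt (fun t : ℝ => powerDist x lam j y - t * v j) (-v j) 0 := by
    simpa using ((hasDerivAt_id (0 : ℝ)).mul_const (v j)).const_sub (powerDist x lam j y)
  refine hderiv.congr_of_eventuallyEq ?_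
  filter_upwards [hcell] with t ht
  rw [powerMin_eq_of_mem_powerCell x ht, hline]

variable {μ : Measure (EuclideanSpace ℝ (Fin d))}

theorem hasDerivAt_powerFunctional_add_smul [IsFiniteMeasure μ] (hac : μ ≪ volume)
    (hx : Function.Injective x) (lam v : Fin n → ℝ) :
    HasDerivAt (fun t : ℝ => powerFunctional x μ (lam + t • v))
      (-∑ i, v i * μ.real (powerCell x lam i)) 0 := by
  set F' : EuclideanSpace ℝ (Fin d) → ℝ :=
    fun y => -∑ i, (powerCell x lam i).indicator (fun _ => v i) y with hF'_def
  have hmeas (i : Fin n) := (isClosed_powerCell x lam i).measurableSet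
  have hF' : ∫ y, F' y ∂μ = -∑ i, v i * μ.real (powerCell x lam i) := by
    rw [hF'_def, integral_neg, integral_finsetSum _ fun i _ =>
      (integrable_const (v i)).indicator (hmeas i)]
    congr 1
    refine Finset.sum_congr rfl fun i _ => ?_
    rw [integral_indicator_const _ (hmeas i), smul_eq_mul, mul_comm]
  have hlip (y : EuclideanSpace ℝ (Fin d)) : LipschitzWith (Real.nnabs ‖v‖)
      fun t : ℝ => powerMin x (lam + t • v) y - powerMin x 0 y := by
    refine LipschitzWith.of_dist_le_mul fun t s => ?_
    rw [Real.coe_nnabs, abs_norm, Real.dist_eq, sub_sub_sub_cancel_right]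
    calc _ ≤ dist (lam + t • v) (lam + s • v) := abs_powerMin_sub_powerMin_le x _ _ y
      _ = ‖v‖ * dist t s := by
        rw [dist_add_left, dist_eq_norm, ← sub_smul, norm_smul, Real.norm_eq_abs, Real.dist_eq,
          mul_comm]
  have hdiff : ∀ᵐ y ∂μ, HasDerivAt (fun t : ℝ => powerMin x (lam + t • v) y - powerMin x 0 y)
      (F' y) 0 := by
    filter_upwards [ae_powerDist_lt_of_mem_powerCell lam hac hx] with y hy
    obtain ⟨j, hj⟩ := exists_mem_powerCell x lam y
    have hF'y : F' y = -v j := by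
      rw [hF'_def]
      dsimp only
      rw [Finset.sum_eq_single j (fun i _ hij => indicator_of_notMem
        (fun hi => (hy j hj i hij).not_ge ((mem_powerCell x lam).1 hi j)) _) (by simp),
        indicator_of_mem hj]
    rw [hF'y]
    exact (hasDerivAt_powerMin_add_smul (hy j hj) v).sub_const _
  rw [← hF']
  exact (hasDerivAt_integral_of_dominated_loc_of_lip (F' := F') univ_mem
    (Eventually.of_forall fun t => by fun_prop) (integrable_powerMin_sub x μ _ 0)
    (Finset.measurable_fun_sum _ fun i _ =>
      measurable_const.indicator (hmeas i)).neg.aestronglyMeasurable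
    (ae_of_all _ fun y => (hlip y).lipschitzOnWith) (integrable_const _) hdiff).2

theorem sum_mul_measureReal_powerCell_eq_zero_of_isMaxOn [IsFiniteMeasure μ] (hac : μ ≪ volume)
    (hx : Function.Injective x) {lam : Fin n → ℝ} (hlam : ∑ i, lam i = 0)
    (hmax : IsMaxOn (powerFunctional x μ) {lam | ∑ i, lam i = 0} lam) {v : Fin n → ℝ}
    (hv : ∑ i, v i = 0) : ∑ i, v i * μ.real (powerCell x lam i) = 0 := by
  have hloc : IsLocalMax (fun t : ℝ => powerFunctional x μ (lam + t • v)) 0 :=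
    Eventually.of_forall fun t => by
      simpa using isMaxOn_iff.mp hmax (lam + t • v)
        (by simp [Finset.sum_add_distrib, ← Finset.mul_sum, hlam, hv])
  simpa using hloc.hasDerivAt_eq_zero (hasDerivAt_powerFunctional_add_smul hac hx lam v)

theorem measure_powerCell_eq_inv_of_isMaxOn [IsProbabilityMeasure μ] (hac : μ ≪ volume)
    (hx : Function.Injective x) {lam : Fin n → ℝ} (hlam : ∑ i, lam i = 0)
    (hmax : IsMaxOn (powerFunctional x μ) {lam | ∑ i, lam i = 0} lam) (j : Fin n) :
    μ (powerCell x lam j) = (n : ℝ≥0∞)⁻¹ := by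
  have hreal (i : Fin n) : μ.real (powerCell x lam i) = μ.real (powerCell x lam j) := by
    have := sum_mul_measureReal_powerCell_eq_zero_of_isMaxOn hac hx hlam hmax
      (v := Pi.single i 1 - Pi.single j 1) (by simp)
    simp only [Pi.sub_apply, sub_mul, Finset.sum_sub_distrib, Pi.single_apply, ite_mul, one_mul,
      zero_mul, Finset.sum_ite_eq', Finset.mem_univ, if_true] at this
    linarith
  have hsum := sum_measure_powerCell lam hac hx (μ := μ)
  simp only [fun i => (measureReal_eq_measureReal_iff (measure_ne_top μ _)
    (measure_ne_top μ _)).1 (hreal i), Finset.sum_const, Finset.card_univ, Fintype.card_fin,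
    nsmul_eq_mul, measure_univ] at hsum
  exact ENNReal.eq_inv_of_mul_eq_one_left (by rwa [mul_comm])

end FirstVariation

section Uniqueness

variable {d n : ℕ} (x : Fin n → EuclideanSpace ℝ (Fin d))

theorem exists_isOpen_biUnion_powerCell_subset (lam lam' : Fin n → ℝ) (S : Finset (Fin n))
    (hS : ∀ j ∈ S, ∀ i ∉ S, lam i - lam' i < lam j - lam' j) :
    ∃ U, IsOpen U ∧ (⋃ j ∈ S, powerCell x lam' j) ⊆ U ∧ U ⊆ ⋃ j ∈ S, powerCell x lam j := by
  refine ⟨⋃ j ∈ S, ⋂ i ∈ Sᶜ, {y | powerDist x lam j y < powerDist x lam i y},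
    isOpen_biUnion fun j _ => isOpen_biInter_finset fun i _ =>
      isOpen_lt (by fun_prop) (by fun_prop),
    ?_, ?_⟩
  · simp only [subset_def, mem_iUnion₂, mem_iInter₂, mem_ofPred_eq, Finset.mem_compl]
    rintro y ⟨j, hj, hy⟩
    refine ⟨j, hj, fun i hi => ?_⟩
    have := hS j hj i hi
    have := (mem_powerCell x lam').mp hy i
    simp only [powerDist] at *
    linarith
  · simp only [subset_def, mem_iUnion₂, mem_iInter₂, mem_ofPred_eq, Finset.mem_compl]
    rintro y ⟨j, hj, hy⟩
    have : NeZero n := ⟨(Fin.pos j).ne'⟩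
    obtain ⟨k, hk⟩ := exists_mem_powerCell x lam y
    refine ⟨k, ?_, hk⟩
    by_contra hkS
    exact (hy k hkS).not_ge (hk j)

variable {x} {μ : Measure (EuclideanSpace ℝ (Fin d))}

theorem exists_eq_add_const_of_measure_powerCell_eq [IsFiniteMeasure μ] [μ.IsOpenPosMeasure]
    (hac : μ ≪ volume) (hx : Function.Injective x) {lam lam' : Fin n → ℝ}
    (hμ : ∀ j, μ (powerCell x lam' j) = μ (powerCell x lam j))
    (hpos : ∀ j, μ (powerCell x lam' j) ≠ 0) : ∃ c, ∀ i, lam i = lam' i + c := by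
  by_contra! hne
  obtain ⟨i₀, -⟩ := hne 0
  have : NeZero n := ⟨(Fin.pos i₀).ne'⟩
  obtain ⟨jmax, hjmax⟩ := Finite.exists_max (lam - lam')
  set S := Finset.univ.filter fun j => ∀ i, lam i - lam' i ≤ lam j - lam' j
  have hS : ∀ j ∈ S, ∀ i ∉ S, lam i - lam' i < lam j - lam' j := by
    intro j hj i hi
    simp only [S, Finset.mem_filter, Finset.mem_univ, true_and, not_forall, not_le] at hj hi
    obtain ⟨k, hk⟩ := hi
    exact hk.trans_le (hj k)
  obtain ⟨k, hk⟩ : ∃ k, k ∉ S := by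
    by_contra! hall
    obtain ⟨i, hi⟩ := hne (lam jmax - lam' jmax)
    have := (Finset.mem_filter.mp (hall i)).2 jmax
    have := hjmax i
    simp only [Pi.sub_apply] at *
    exact hi (by linarith)
  obtain ⟨U, hU, hAU, hUB⟩ := exists_isOpen_biUnion_powerCell_subset x lam lam' S hS
  have hA := isClosed_biUnion_finset fun j (_ : j ∈ S) => isClosed_powerCell x lam' j
  have hA_eq : (⋃ j ∈ S, powerCell x lam' j) = U := by
    refine hA.eq_of_subset_of_measure_le hU hAU ?_ (measure_ne_top μ _)
    calc μ U ≤ μ (⋃ j ∈ S, powerCell x lam j) := measure_mono hUB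
      _ = μ (⋃ j ∈ S, powerCell x lam' j) := by
        simp only [measure_biUnion_powerCell _ hac hx, hμ]
  rcases isClopen_iff.mp ⟨hA, hA_eq ▸ hU⟩ with hempty | huniv
  · have hjmax : jmax ∈ S := by simpa [S] using hjmax
    exact hpos jmax (measure_mono_null (subset_biUnion_of_mem (u := fun j => powerCell x lam' j)
      hjmax) (hempty ▸ measure_empty))
  · refine hpos k (measure_mono_null (fun y hy => ?_) ((measure_biUnion_null_iff
      S.countable_toSet).2 fun j hj =>
        aedisjoint_powerCell lam' hac hx (ne_of_mem_of_not_mem hj hk).symm))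
    obtain ⟨j, hj, hyj⟩ := mem_iUnion₂.mp (huniv ▸ mem_univ y)
    exact mem_biUnion hj ⟨hy, hyj⟩

end Uniqueness

/-- Aurenhammer–Hoffmann–Aronov: for an absolutely continuous probability
measure `μ` on `ℝ^d` positive on nonempty open sets and `n` distinct sites,
there is a unique choice of weights summing to zero whose power diagram
splits `μ` into `n` cells of measure `1/n` each. -/
theorem exists_unique_equalizing_power_diagram (d n : ℕ) (hn : 0 < n)
    (μ : Measure (EuclideanSpace ℝ (Fin d))) [IsProbabilityMeasure μ]
    (hac : μ ≪ volume)
    (hpos : ∀ U : Set (EuclideanSpace ℝ (Fin d)), IsOpen U → U.Nonempty → 0 < μ U)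
    (x : Fin n → EuclideanSpace ℝ (Fin d)) (hx : Function.Injective x) :
    ∃! lam : Fin n → ℝ, (∑ i, lam i = 0) ∧
      ∀ j, μ (powerCell x lam j) = (n : ENNReal)⁻¹ := by
  have : NeZero n := ⟨hn.ne'⟩
  have : μ.IsOpenPosMeasure := ⟨fun U hU hne => (hpos U hU hne).ne'⟩
  obtain ⟨lam, hsum, hmax⟩ := exists_isMaxOn_powerFunctional x μ
  have hcell := measure_powerCell_eq_inv_of_isMaxOn hac hx hsum hmax
  refine ⟨lam, ⟨hsum, hcell⟩, fun lam' ⟨hsum', hcell'⟩ => ?_⟩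
  obtain ⟨c, hc⟩ := exists_eq_add_const_of_measure_powerCell_eq hac hx
    (fun j => (hcell j).trans (hcell' j).symm) (fun j => by simp [hcell j])
  have hc0 : c = 0 := by
    simpa [hc, Finset.sum_add_distrib, hsum, hn.ne'] using hsum'
  funext i
  simp [hc, hc0]
end

section
/- Let n = ms with m, s ≥ 1, suppose that (i) for any absolutely continuous probability measure μ and any n-tuple of absolutely continuous probability measures on R^d there is a convex m-partition equalizing μ with each part assigned to exactly s of the n measures so that each assigned measure gives its part at least 1/m, and (ii) the proportional partition theorem holds for s measures. Then for any absolutely continuous probability measure μ and any n-tuple (μ_1,...,μ_n) of absolutely continuous probability measures on R^d there exists a convex partition (D_1, ..., D_n) of R^d and a permutation π of [n] with μ(D_k) = 1/n for all k and μ_i(D_{π(i)}) ≥ 1/n for all i. -/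
open MeasureTheory

/-- A convex partition of `ℝ^d` into `k` parts: closed convex sets covering
`ℝ^d` with pairwise disjoint interiors. -/
def IsConvexPartition {d k : ℕ} (C : Fin k → Set (EuclideanSpace ℝ (Fin d))) : Prop :=
  (∀ i, IsClosed (C i)) ∧ (∀ i, Convex ℝ (C i)) ∧ (⋃ i, C i = Set.univ) ∧
    Pairwise fun i j => Disjoint (interior (C i)) (interior (C j))

/-! Cut `ℝ^d` into the `m` coarse parts, then cut each part `C` into `s` pieces of equal
`μ[|C]`-mass by the `s`-measure theorem applied to the conditional measures `νᵢ[|C]` of the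
measures assigned to `C`. Since `μ[t|C] * μ C = μ (C ∩ t)`, the pieces have `μ`-mass
`1/(ms) = 1/n`, and each `νᵢ` receives at least `(1/m) * (1/s) = 1/n`. -/

open ProbabilityTheory

theorem Equiv.exists_prod_fst_eq {α β : Type*} [Fintype α] [Fintype β] [DecidableEq β]
    (φ : α → β) {s : ℕ} (hφ : ∀ b, (Finset.univ.filter fun a => φ a = b).card = s) :
    ∃ e : α ≃ β × Fin s, ∀ a, (e a).1 = φ a := by
  have hcard : ∀ b, Fintype.card {p : β × Fin s // p.1 = b} = s := fun b => by
    rw [Fintype.card_subtype, ← Finset.univ_product_univ,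
      Finset.filter_product_left (· = b)]
    simp [Finset.filter_eq']
  have fiberEquiv : ∀ b, {a // φ a = b} ≃ {p : β × Fin s // p.1 = b} := fun b =>
    Fintype.equivOfCardEq <| by rw [Fintype.card_subtype, hφ, hcard]
  exact ⟨Equiv.ofFiberEquiv fiberEquiv, Equiv.ofFiberEquiv_map fiberEquiv⟩

namespace IsConvexPartition

variable {d m s n : ℕ}

theorem refine {C : Fin m → Set (EuclideanSpace ℝ (Fin d))} (hC : IsConvexPartition C)
    {D : Fin m → Fin s → Set (EuclideanSpace ℝ (Fin d))} (hD : ∀ j, IsConvexPartition (D j))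
    (e : Fin n ≃ Fin m × Fin s) :
    IsConvexPartition fun k => C (e k).1 ∩ D (e k).1 (e k).2 := by
  obtain ⟨hCclosed, hCconvex, hCcover, hCdisj⟩ := hC
  refine ⟨fun k => (hCclosed _).inter ((hD _).1 _),
    fun k => (hCconvex _).inter ((hD _).2.1 _), ?_, fun k k' hkk' => ?_⟩
  · refine Set.eq_univ_of_forall fun x => ?_
    obtain ⟨j, hj⟩ := Set.mem_iUnion.mp (hCcover.symm ▸ Set.mem_univ x)
    obtain ⟨h, hh⟩ := Set.mem_iUnion.mp ((hD j).2.2.1.symm ▸ Set.mem_univ x)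
    exact Set.mem_iUnion.mpr ⟨e.symm (j, h), by simpa using And.intro hj hh⟩
  have hne : e k ≠ e k' := e.injective.ne hkk'
  dsimp only
  generalize e k = p, e k' = p' at hne ⊢
  obtain ⟨j, h⟩ := p
  obtain ⟨j', h'⟩ := p'
  simp only [interior_inter]
  by_cases hj : j = j'
  · subst hj
    have hh : h ≠ h' := by simpa using hne
    exact ((hD j).2.2.2 hh).mono Set.inter_subset_right Set.inter_subset_right
  · exact (hCdisj hj).mono Set.inter_subset_left Set.inter_subset_left

end IsConvexPartition

section Conditioning

variable {Ω : Type*} [MeasurableSpace Ω] {μ : Measure Ω} [IsFiniteMeasure μ] {s t : Set Ω}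

theorem measure_inter_eq_inv_mul_of_cond (hs : MeasurableSet s) {a b : ℕ}
    (hμs : μ s = (a : ENNReal)⁻¹) (hμt : μ[t|s] = (b : ENNReal)⁻¹) :
    μ (s ∩ t) = ((a * b : ℕ) : ENNReal)⁻¹ := by
  rw [← cond_mul_eq_inter hs, hμs, hμt, mul_comm, Nat.cast_mul,
    ENNReal.mul_inv (Or.inr (ENNReal.natCast_ne_top b)) (Or.inl (ENNReal.natCast_ne_top a))]

theorem mul_le_toReal_measure_inter_of_cond (hs : MeasurableSet s) {a b : ℝ} (hb : 0 ≤ b)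
    (hμs : a ≤ (μ s).toReal) (hμt : b ≤ (μ[t|s]).toReal) :
    a * b ≤ (μ (s ∩ t)).toReal := by
  rw [← cond_mul_eq_inter hs, ENNReal.toReal_mul, mul_comm (μ[t|s]).toReal]
  exact mul_le_mul hμs hμt hb ENNReal.toReal_nonneg

end Conditioning

theorem proportional_partition_subdivision_general (d m s n : ℕ)
    (hn : n = m * s)
    (hcoarse : ∀ μ : Measure (EuclideanSpace ℝ (Fin d)),
      IsProbabilityMeasure μ → μ ≪ volume →
      ∀ ν : Fin n → Measure (EuclideanSpace ℝ (Fin d)),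
      (∀ i, IsProbabilityMeasure (ν i)) → (∀ i, ν i ≪ volume) →
      ∃ C : Fin m → Set (EuclideanSpace ℝ (Fin d)), IsConvexPartition C ∧
        (∀ j, μ (C j) = (m : ENNReal)⁻¹) ∧
        ∃ φ : Fin n → Fin m,
          (∀ j : Fin m, (Finset.univ.filter fun i => φ i = j).card = s) ∧
          (∀ i, (1 : ℝ) / m ≤ (ν i (C (φ i))).toReal))
    (hprop : ∀ μ : Measure (EuclideanSpace ℝ (Fin d)),
      IsProbabilityMeasure μ → μ ≪ volume →
      ∀ ν : Fin s → Measure (EuclideanSpace ℝ (Fin d)),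
      (∀ i, IsProbabilityMeasure (ν i)) → (∀ i, ν i ≪ volume) →
      ∃ D : Fin s → Set (EuclideanSpace ℝ (Fin d)), IsConvexPartition D ∧
        (∀ k, μ (D k) = (s : ENNReal)⁻¹) ∧
        ∃ π : Equiv.Perm (Fin s), ∀ i, (1 : ℝ) / s ≤ (ν i (D (π i))).toReal) :
    ∀ μ : Measure (EuclideanSpace ℝ (Fin d)),
      IsProbabilityMeasure μ → μ ≪ volume →
      ∀ ν : Fin n → Measure (EuclideanSpace ℝ (Fin d)),
      (∀ i, IsProbabilityMeasure (ν i)) → (∀ i, ν i ≪ volume) →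
      ∃ D : Fin n → Set (EuclideanSpace ℝ (Fin d)), IsConvexPartition D ∧
        (∀ k, μ (D k) = (n : ENNReal)⁻¹) ∧
        ∃ π : Equiv.Perm (Fin n), ∀ i, (1 : ℝ) / n ≤ (ν i (D (π i))).toReal := by
  subst hn
  intro μ hμ hμac ν hν hνac
  obtain ⟨C, hC, hCμ, φ, hφcard, hφν⟩ := hcoarse μ hμ hμac ν hν hνac
  obtain ⟨e, he⟩ := Equiv.exists_prod_fst_eq φ hφcard
  have hCmeas : ∀ j, MeasurableSet (C j) := fun j => (hC.1 j).measurableSet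
  have hνC : ∀ i, ν i (C (e i).1) ≠ 0 := fun i h0 => by
    have := hφν i
    rw [← he, h0, ENNReal.toReal_zero] at this
    exact (one_div_pos.mpr (Nat.cast_pos.mpr (e i).1.pos)).not_ge this
  have hμC : ∀ j, μ (C j) ≠ 0 := fun j => by simp [hCμ j]
  choose D hD hDμ σ hσ using fun j => hprop μ[|C j] (cond_isProbabilityMeasure (hμC j))
    (cond_absolutelyContinuous.trans hμac) (fun h => (ν (e.symm (j, h)))[|C j])
    (fun h => cond_isProbabilityMeasure (by simpa using hνC (e.symm (j, h))))
    (fun h => cond_absolutelyContinuous.trans (hνac _))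
  refine ⟨fun k => C (e k).1 ∩ D (e k).1 (e k).2, hC.refine hD e, fun k => ?_,
    e.symm.permCongr (Equiv.prodShear (Equiv.refl _) σ), fun i => ?_⟩
  · exact measure_inter_eq_inv_mul_of_cond (hCmeas _) (hCμ _) (hDμ _ _)
  · have hσi := hσ (e i).1 (e i).2
    simp only [Prod.mk.eta, Equiv.symm_apply_apply] at hσi
    have hφi : (1 : ℝ) / m ≤ (ν i (C (e i).1)).toReal := he i ▸ hφν i
    calc (1 : ℝ) / ↑(m * s) = 1 / m * (1 / s) := by rw [Nat.cast_mul, one_div_mul_one_div]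
      _ ≤ _ := by
        simpa using mul_le_toReal_measure_inter_of_cond (hCmeas _) (by positivity) hφi hσi

/-- The recursive subdivision step in the proof of the proportional convex
partition theorem: if `n = m * s`, (i) any `n` measures admit a coarse convex
`m`-partition equalizing a reference measure `μ` in which each part is
assigned to exactly `s` of the measures, each getting at least `1/m`, and
(ii) the proportional partition theorem holds for `s` measures, then the
proportional partition theorem holds for `n` measures. -/
theorem proportional_partition_subdivision (d m s n : ℕ)
    (hm : 0 < m) (hs : 0 < s) (hn : n = m * s)
    (hcoarse : ∀ μ : Measure (EuclideanSpace ℝ (Fin d)),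
      IsProbabilityMeasure μ → μ ≪ volume →
      ∀ ν : Fin n → Measure (EuclideanSpace ℝ (Fin d)),
      (∀ i, IsProbabilityMeasure (ν i)) → (∀ i, ν i ≪ volume) →
      ∃ C : Fin m → Set (EuclideanSpace ℝ (Fin d)), IsConvexPartition C ∧
        (∀ j, μ (C j) = (m : ENNReal)⁻¹) ∧
        ∃ φ : Fin n → Fin m,
          (∀ j : Fin m, (Finset.univ.filter fun i => φ i = j).card = s) ∧
          (∀ i, (1 : ℝ) / m ≤ (ν i (C (φ i))).toReal))
    (hprop : ∀ μ : Measure (EuclideanSpace ℝ (Fin d)),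
      IsProbabilityMeasure μ → μ ≪ volume →
      ∀ ν : Fin s → Measure (EuclideanSpace ℝ (Fin d)),
      (∀ i, IsProbabilityMeasure (ν i)) → (∀ i, ν i ≪ volume) →
      ∃ D : Fin s → Set (EuclideanSpace ℝ (Fin d)), IsConvexPartition D ∧
        (∀ k, μ (D k) = (s : ENNReal)⁻¹) ∧
        ∃ π : Equiv.Perm (Fin s), ∀ i, (1 : ℝ) / s ≤ (ν i (D (π i))).toReal) :
    ∀ μ : Measure (EuclideanSpace ℝ (Fin d)),
      IsProbabilityMeasure μ → μ ≪ volume →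
      ∀ ν : Fin n → Measure (EuclideanSpace ℝ (Fin d)),
      (∀ i, IsProbabilityMeasure (ν i)) → (∀ i, ν i ≪ volume) →
      ∃ D : Fin n → Set (EuclideanSpace ℝ (Fin d)), IsConvexPartition D ∧
        (∀ k, μ (D k) = (n : ENNReal)⁻¹) ∧
        ∃ π : Equiv.Perm (Fin n), ∀ i, (1 : ℝ) / n ≤ (ν i (D (π i))).toReal :=
  proportional_partition_subdivision_general d m s n hn hcoarse hprop
end
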